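/- (Projection Lemma, Kempe–Kitaev–Regev) Let H = H₁ + H₂ be Hermitian operators on a Hilbert space decomposed as S ⊕ S⊥, where H₁ vanishes on S (H₁|_S = 0) and every eigenvector of H₁ in S⊥ has eigenvalue at least J, with J > 2‖H₂‖. Then λ(H₂|_S) − ‖H₂‖²/(J − 2‖H₂‖) ≤ λ(H) ≤ λ(H₂|_S), where λ denotes minimum eigenvalue and H₂|_S is H₂ restricted (compressed) to S. -/

import Mathlib

open Matrix
open scoped Kronecker Matrix.Norms.L2Operator ComplexOrder

noncomputable section

namespace Matrix.PosSemidef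

/-- The positive semidefinite square root (removed from Mathlib; old definition restored). -/
noncomputable def sqrt {n : Type*} [Fintype n] [DecidableEq n] {𝕜 : Type*} [RCLike 𝕜]
    {A : Matrix n n 𝕜} (hA : A.PosSemidef) : Matrix n n 𝕜 :=
  (hA.1.eigenvectorUnitary : Matrix n n 𝕜) * diagonal ((↑) ∘ Real.sqrt ∘ hA.1.eigenvalues) *
    (star hA.1.eigenvectorUnitary : Matrix n n 𝕜)

end Matrix.PosSemidef

/-- Trace norm `‖A‖₁ = tr √(Aᴴ A)`. -/
noncomputable def traceNorm {m : ℕ} (A : Matrix (Fin m) (Fin m) ℂ) : ℝ :=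
  ((Matrix.posSemidef_conjTranspose_mul_self A).sqrt.trace).re

/-- Quadratic form `Re ⟨v, H v⟩`. -/
noncomputable def quadForm {m : Type*} [Fintype m] (H : Matrix m m ℂ) (v : m → ℂ) : ℝ :=
  (dotProduct (star v) (H *ᵥ v)).re

/-- Squared Euclidean norm of a vector. -/
noncomputable def vnormSq {m : Type*} [Fintype m] (v : m → ℂ) : ℝ :=
  (dotProduct (star v) v).re

/-! Split a unit vector `v` as `Pr v + (1 - Pr) v` and put `a = ‖(1 - Pr) v‖`. The gap gives
`⟨v, H₁ v⟩ ≥ J a²`; the minimality of `λ(H₂|_S)` on `Pr v` and the operator-norm bound on the cross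
and `S⊥` terms give `⟨v, H₂ v⟩ ≥ λ(H₂|_S) (1 - a²) - ‖H₂‖ (2a + a²)`. As `λ(H₂|_S) ≤ ‖H₂‖`, the sum
is at least `λ(H₂|_S) - 2‖H₂‖ a + (J - 2‖H₂‖) a²`, whose minimum over `a` is the claimed bound.
For the upper bound, `H₁` vanishes on a minimiser of `H₂` on `S`. -/

section

variable {m : Type*} [Fintype m]

lemma star_dotProduct_eq_inner (x y : m → ℂ) :
    star x ⬝ᵥ y = inner ℂ (WithLp.toLp 2 x) (WithLp.toLp 2 y) := by
  rw [EuclideanSpace.inner_toLp_toLp, dotProduct_comm]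

lemma vnormSq_eq_norm_sq (x : m → ℂ) : vnormSq x = ‖WithLp.toLp 2 x‖ ^ 2 := by
  rw [vnormSq, star_dotProduct_eq_inner]
  exact inner_self_eq_norm_sq (𝕜 := ℂ) _

lemma quadForm_add (H K : Matrix m m ℂ) (v : m → ℂ) :
    quadForm (H + K) v = quadForm H v + quadForm K v := by
  simp only [quadForm, add_mulVec, dotProduct_add, Complex.add_re]

lemma quadForm_sub (H K : Matrix m m ℂ) (v : m → ℂ) :
    quadForm (H - K) v = quadForm H v - quadForm K v := by
  simp only [quadForm, sub_mulVec, dotProduct_sub, Complex.sub_re]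

lemma quadForm_real_smul (c : ℝ) (H : Matrix m m ℂ) (v : m → ℂ) :
    quadForm (c • H) v = c * quadForm H v := by
  simp only [quadForm, smul_mulVec, dotProduct_smul, Complex.real_smul, Complex.re_ofReal_mul]

lemma quadForm_real_smul_vec (H : Matrix m m ℂ) (c : ℝ) (v : m → ℂ) :
    quadForm H ((c : ℂ) • v) = c ^ 2 * quadForm H v := by
  simp only [quadForm, star_smul, mulVec_smul, smul_dotProduct, dotProduct_smul, Complex.star_def,
    Complex.conj_ofReal, smul_eq_mul, ← mul_assoc, ← Complex.ofReal_mul, Complex.re_ofReal_mul, sq]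

lemma quadForm_add_vec {H : Matrix m m ℂ} (hH : H.IsHermitian) (x y : m → ℂ) :
    quadForm H (x + y) = quadForm H x + 2 * (star x ⬝ᵥ (H *ᵥ y)).re + quadForm H y := by
  have hyx : star y ⬝ᵥ (H *ᵥ x) = star (star x ⬝ᵥ (H *ᵥ y)) := by
    rw [star_dotProduct, star_mulVec, hH.eq, dotProduct_mulVec]
  simp only [quadForm, star_add, mulVec_add, add_dotProduct, dotProduct_add, Complex.add_re, hyx,
    Complex.star_def, Complex.conj_re]
  ring

lemma Matrix.PosSemidef.quadForm_nonneg {H : Matrix m m ℂ} (hH : H.PosSemidef) (v : m → ℂ) :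
    0 ≤ quadForm H v :=
  (Complex.nonneg_iff.mp (hH.dotProduct_mulVec_nonneg v)).1

lemma quadForm_one [DecidableEq m] (v : m → ℂ) : quadForm 1 v = vnormSq v := by
  rw [quadForm, one_mulVec, vnormSq]

lemma quadForm_eq_vnormSq_mulVec_of_idempotent {P : Matrix m m ℂ} (hP : P.IsHermitian)
    (hP2 : IsIdempotentElem P) (v : m → ℂ) : quadForm P v = vnormSq (P *ᵥ v) := by
  rw [quadForm, vnormSq, star_mulVec, ← dotProduct_mulVec, mulVec_mulVec, hP.eq, hP2]

lemma norm_sq_add_norm_sq_of_idempotent [DecidableEq m] {P : Matrix m m ℂ} (hP : P.IsHermitian)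
    (hP2 : IsIdempotentElem P) (v : m → ℂ) :
    ‖WithLp.toLp 2 (P *ᵥ v)‖ ^ 2 + ‖WithLp.toLp 2 ((1 - P) *ᵥ v)‖ ^ 2 = vnormSq v := by
  rw [← vnormSq_eq_norm_sq, ← vnormSq_eq_norm_sq,
    ← quadForm_eq_vnormSq_mulVec_of_idempotent hP hP2,
    ← quadForm_eq_vnormSq_mulVec_of_idempotent (isHermitian_one.sub hP) hP2.one_sub,
    ← quadForm_add, add_sub_cancel, quadForm_one]

lemma mul_norm_sq_le_quadForm_of_posSemidef_sub {H Q : Matrix m m ℂ} (hQ : Q.IsHermitian)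
    (hQ2 : IsIdempotentElem Q) {J : ℝ} (hgap : (H - J • Q).PosSemidef) (v : m → ℂ) :
    J * ‖WithLp.toLp 2 (Q *ᵥ v)‖ ^ 2 ≤ quadForm H v := by
  have := hgap.quadForm_nonneg v
  rwa [quadForm_sub, quadForm_real_smul, quadForm_eq_vnormSq_mulVec_of_idempotent hQ hQ2,
    vnormSq_eq_norm_sq, sub_nonneg] at this

variable [DecidableEq m]

lemma abs_re_star_dotProduct_mulVec_le (H : Matrix m m ℂ) (x y : m → ℂ) :
    |(star x ⬝ᵥ (H *ᵥ y)).re| ≤ ‖H‖ * ‖WithLp.toLp 2 x‖ * ‖WithLp.toLp 2 y‖ :=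
  calc |(star x ⬝ᵥ (H *ᵥ y)).re|
      ≤ ‖WithLp.toLp 2 x‖ * ‖WithLp.toLp 2 (H *ᵥ y)‖ := by
        rw [star_dotProduct_eq_inner]
        exact (Complex.abs_re_le_norm _).trans (norm_inner_le_norm _ _)
    _ ≤ ‖WithLp.toLp 2 x‖ * (‖H‖ * ‖WithLp.toLp 2 y‖) :=
        mul_le_mul_of_nonneg_left (H.l2_opNorm_mulVec _) (norm_nonneg _)
    _ = ‖H‖ * ‖WithLp.toLp 2 x‖ * ‖WithLp.toLp 2 y‖ := by ring

lemma quadForm_le_norm_mul_norm_sq (H : Matrix m m ℂ) (v : m → ℂ) :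
    quadForm H v ≤ ‖H‖ * ‖WithLp.toLp 2 v‖ ^ 2 := by
  rw [sq, ← mul_assoc]
  exact (le_abs_self _).trans (abs_re_star_dotProduct_mulVec_le H v v)

lemma quadForm_sub_norm_mul_le_quadForm_add {H : Matrix m m ℂ} (hH : H.IsHermitian)
    (x y : m → ℂ) :
    quadForm H x - ‖H‖ * (2 * ‖WithLp.toLp 2 x‖ * ‖WithLp.toLp 2 y‖ + ‖WithLp.toLp 2 y‖ ^ 2) ≤
      quadForm H (x + y) := by
  have hxy := neg_le_of_abs_le (abs_re_star_dotProduct_mulVec_le H x y)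
  have hyy := neg_le_of_abs_le (abs_re_star_dotProduct_mulVec_le H y y)
  rw [quadForm_add_vec hH]
  rw [← quadForm] at hyy
  linarith

lemma mul_norm_sq_le_quadForm_of_mem_lowerBounds {H P : Matrix m m ℂ} {lam : ℝ}
    (hlam : lam ∈ lowerBounds {r | ∃ v, P *ᵥ v = v ∧ vnormSq v = 1 ∧ quadForm H v = r})
    {v : m → ℂ} (hv : P *ᵥ v = v) : lam * ‖WithLp.toLp 2 v‖ ^ 2 ≤ quadForm H v := by
  rcases eq_or_ne v 0 with rfl | hv0
  · simp [quadForm]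
  have hc : 0 < ‖WithLp.toLp 2 v‖ := norm_pos_iff.mpr (by simpa using hv0)
  have hunit := hlam ⟨((‖WithLp.toLp 2 v‖⁻¹ : ℝ) : ℂ) • v, by rw [mulVec_smul, hv], by
    rw [← quadForm_one, quadForm_real_smul_vec, quadForm_one, vnormSq_eq_norm_sq]
    field_simp, rfl⟩
  rw [quadForm_real_smul_vec, inv_pow, inv_mul_eq_div] at hunit
  rwa [← le_div_iff₀ (by positivity)]

end

lemma sub_sq_div_le_of_sq_add_sq_eq_one {lam N J a b : ℝ} (hN : 0 ≤ N) (hJ : 2 * N < J)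
    (hlam : lam ≤ N) (ha : 0 ≤ a) (hb : 0 ≤ b) (hab : b ^ 2 + a ^ 2 = 1) :
    lam - N ^ 2 / (J - 2 * N) ≤ J * a ^ 2 + (lam * b ^ 2 - N * (2 * b * a + a ^ 2)) := by
  have hK : 0 < J - 2 * N := by linarith
  have hsq : (J - 2 * N) * a ^ 2 - 2 * N * a + N ^ 2 / (J - 2 * N) =
      ((J - 2 * N) * a - N) ^ 2 / (J - 2 * N) := by
    field_simp
    ring
  have hb1 : b ≤ 1 := by nlinarith
  have hlam_b : lam * b ^ 2 = lam - lam * a ^ 2 := by linear_combination lam * hab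
  have hlam_a : 0 ≤ (N - lam) * a ^ 2 := mul_nonneg (sub_nonneg.mpr hlam) (sq_nonneg a)
  have hNab : 0 ≤ N * a * (1 - b) := mul_nonneg (mul_nonneg hN ha) (sub_nonneg.mpr hb1)
  linarith [div_nonneg (sq_nonneg ((J - 2 * N) * a - N)) hK.le]

theorem projection_lemma_general {n : ℕ} (H₁ H₂ Pr : Matrix (Fin n) (Fin n) ℂ)
    (hH₂ : H₂.IsHermitian)
    (hPr : Pr.IsHermitian) (hPr2 : Pr * Pr = Pr)
    (hvanish : H₁ * Pr = 0)
    (J : ℝ) (hJ : 2 * ‖H₂‖ < J)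
    (hgap : (H₁ - J • ((1 : Matrix (Fin n) (Fin n) ℂ) - Pr)).PosSemidef)
    (lamS lamH : ℝ)
    (hlamS : IsLeast {r | ∃ v, Pr *ᵥ v = v ∧ vnormSq v = 1 ∧ quadForm H₂ v = r} lamS)
    (hlamH : IsLeast {r | ∃ v, vnormSq v = 1 ∧ quadForm (H₁ + H₂) v = r} lamH) :
    lamS - ‖H₂‖ ^ 2 / (J - 2 * ‖H₂‖) ≤ lamH ∧ lamH ≤ lamS := by
  obtain ⟨⟨w, hwP, hwn, rfl⟩, hSlb⟩ := hlamS
  obtain ⟨⟨v, hvn, rfl⟩, hHlb⟩ := hlamH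
  have hH₁w : H₁ *ᵥ w = 0 := by rw [← hwP, mulVec_mulVec, hvanish, zero_mulVec]
  refine ⟨?_, hHlb ⟨w, hwn, by
    rw [quadForm_add, quadForm, hH₁w, dotProduct_zero, Complex.zero_re, zero_add]⟩⟩
  have hpyth := norm_sq_add_norm_sq_of_idempotent hPr hPr2 v
  have hH₁v := mul_norm_sq_le_quadForm_of_posSemidef_sub (isHermitian_one.sub hPr)
    (IsIdempotentElem.one_sub hPr2) hgap v
  have hH₂v₁ := mul_norm_sq_le_quadForm_of_mem_lowerBounds hSlb
    (show Pr *ᵥ (Pr *ᵥ v) = Pr *ᵥ v by rw [mulVec_mulVec, hPr2])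
  have hH₂v := quadForm_sub_norm_mul_le_quadForm_add hH₂ (Pr *ᵥ v) ((1 - Pr) *ᵥ v)
  rw [← add_mulVec, add_sub_cancel, one_mulVec] at hH₂v
  have hwH₂ := quadForm_le_norm_mul_norm_sq H₂ w
  rw [← vnormSq_eq_norm_sq, hwn, mul_one] at hwH₂
  rw [hvn] at hpyth
  rw [quadForm_add]
  linarith [sub_sq_div_le_of_sq_add_sq_eq_one (norm_nonneg H₂) hJ hwH₂ (norm_nonneg _)
    (norm_nonneg _) hpyth]

/-- Projection Lemma, Kempe–Kitaev–Regev: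
`λ(H₂|_S) − ‖H₂‖²/(J − 2‖H₂‖) ≤ λ(H₁ + H₂) ≤ λ(H₂|_S)`, where `H₁` vanishes on `S` and is
`≥ J` on `S⊥`, with `J > 2‖H₂‖`.  The subspace `S` is given by its orthogonal projector `Pr`,
and minimum eigenvalues are characterized as minima of the Rayleigh quotient. -/
theorem projection_lemma {n : ℕ} (H₁ H₂ Pr : Matrix (Fin n) (Fin n) ℂ)
    (hH₁ : H₁.IsHermitian) (hH₂ : H₂.IsHermitian)
    (hPr : Pr.IsHermitian) (hPr2 : Pr * Pr = Pr)
    (hvanish : H₁ * Pr = 0)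
    (J : ℝ) (hJ : 2 * ‖H₂‖ < J)
    (hgap : (H₁ - J • ((1 : Matrix (Fin n) (Fin n) ℂ) - Pr)).PosSemidef)
    (lamS lamH : ℝ)
    (hlamS : IsLeast {r | ∃ v, Pr *ᵥ v = v ∧ vnormSq v = 1 ∧ quadForm H₂ v = r} lamS)
    (hlamH : IsLeast {r | ∃ v, vnormSq v = 1 ∧ quadForm (H₁ + H₂) v = r} lamH) :
    lamS - ‖H₂‖ ^ 2 / (J - 2 * ‖H₂‖) ≤ lamH ∧ lamH ≤ lamS :=
  projection_lemma_general H₁ H₂ Pr hH₂ hPr hPr2 hvanish J hJ hgap lamS lamH hlamS hlamH
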